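/- Let λ̄ ≥ 1 and, for each k ∈ ℤ³ with |k| = λ̄, let A_k ∈ ℝ³ satisfy A_k · k = 0, |A_k| = 1/√2, and A_{−k} = A_k; set B_k := A_k + i (k/|k|) × A_k ∈ ℂ³, and let a_k ∈ ℂ with conj(a_k) = a_{−k}. Then the vector field W(ξ) := Σ_{|k|=λ̄} a_k B_k e^{i k·ξ} satisfies the average identity ⨍_{𝕋³} W ⊗ W dξ = (1/2) Σ_{|k|=λ̄} |a_k|² (Id − (k/|k|) ⊗ (k/|k|)), where Id denotes the 3×3 identity matrix. -/

import Mathlib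

open scoped BigOperators
open MeasureTheory

noncomputable section

/-- The cross product of two vectors in `ℝ³`. -/
def cross3 (u v : Fin 3 → ℝ) : Fin 3 → ℝ :=
  ![u 1 * v 2 - u 2 * v 1, u 2 * v 0 - u 0 * v 2, u 0 * v 1 - u 1 * v 0]

/-- A fundamental domain of the `(2π)ℤ³`-periodic lattice. -/
def D3 : Set (Fin 3 → ℝ) := Set.univ.pi fun _ => Set.Icc (0 : ℝ) (2 * Real.pi)

/-!
Both components of `W` are trigonometric polynomials with conjugate-symmetric coefficients
(`conj (a_k B_k) = a_{-k} B_{-k}`), hence real-valued. By orthogonality of the characters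
`e^{i k·ξ}` on the torus only the pairs `(k, -k)` survive in `∫ W_i W_j`, which leaves
`(2π)³ Σ |a_k|² Re (B_k ⊗ conj B_k)`. Finally, for a unit vector `K` and `A ⊥ K`,
`A, K × A` and `|A| K` form an orthogonal frame of common length `|A|`, so
`A ⊗ A + (K × A) ⊗ (K × A) = |A|² (Id - K ⊗ K)`.
-/

open Complex ComplexConjugate Matrix
open scoped Real

section TorusCharacter

variable {ι : Type*} [Fintype ι]

def torusChar (k : ι → ℤ) (ξ : ι → ℝ) : ℂ :=
  exp (I * ((∑ j, (k j : ℝ) * ξ j : ℝ) : ℂ))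

lemma torusChar_eq_prod (k : ι → ℤ) (ξ : ι → ℝ) :
    torusChar k ξ = ∏ j, exp (I * (k j : ℂ) * (ξ j : ℂ)) := by
  rw [torusChar, ← exp_sum]
  push_cast
  rw [Finset.mul_sum]
  simp only [mul_assoc]

lemma torusChar_add (k l : ι → ℤ) (ξ : ι → ℝ) :
    torusChar (k + l) ξ = torusChar k ξ * torusChar l ξ := by
  simp only [torusChar_eq_prod, ← Finset.prod_mul_distrib, ← exp_add, Pi.add_apply,
    Int.cast_add, mul_add, add_mul]

lemma conj_torusChar (k : ι → ℤ) (ξ : ι → ℝ) :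
    conj (torusChar k ξ) = torusChar (-k) ξ := by
  simp only [torusChar_eq_prod, map_prod, ← exp_conj, map_mul, conj_I, conj_ofReal, map_intCast,
    Pi.neg_apply, Int.cast_neg, mul_neg, neg_mul]

@[fun_prop]
lemma continuous_torusChar (k : ι → ℤ) : Continuous (torusChar k) := by
  unfold torusChar
  fun_prop

lemma integral_exp_int_mul_I_Icc (m : ℤ) :
    ∫ x in Set.Icc (0 : ℝ) (2 * π), exp (I * m * x) = if m = 0 then ((2 * π : ℝ) : ℂ) else 0 := by
  rw [integral_Icc_eq_integral_Ioc, ← intervalIntegral.integral_of_le Real.two_pi_pos.le]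
  split_ifs with hm
  · simp [hm]
  · have hc : I * m ≠ 0 := mul_ne_zero I_ne_zero (Int.cast_ne_zero.mpr hm)
    rw [integral_exp_mul_complex hc, div_eq_zero_iff, sub_eq_zero]
    left
    rw [show I * m * ((2 * π : ℝ) : ℂ) = m * (2 * π * I) by push_cast; ring,
      exp_int_mul_two_pi_mul_I]
    simp

lemma integral_torusChar (k : ι → ℤ) :
    ∫ ξ in Set.univ.pi fun _ : ι => Set.Icc 0 (2 * π), torusChar k ξ
      = if k = 0 then (((2 * π) ^ Fintype.card ι : ℝ) : ℂ) else 0 := by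
  simp only [volume_pi, Measure.restrict_pi_pi, torusChar_eq_prod]
  rw [integral_fintype_prod_eq_prod (fun j (x : ℝ) => exp (I * (k j : ℂ) * x))]
  simp only [integral_exp_int_mul_I_Icc]
  split_ifs with hk
  · simp [hk]
  · obtain ⟨j, hj⟩ := Function.ne_iff.mp hk
    exact Finset.prod_eq_zero (Finset.mem_univ j) (if_neg hj)

end TorusCharacter

section TrigPolynomial

variable {ι : Type*} [Fintype ι] {S : Finset (ι → ℤ)}

lemma conj_sum_torusChar (hS : ∀ k ∈ S, -k ∈ S) {c : (ι → ℤ) → ℂ}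
    (hc : ∀ k ∈ S, conj (c k) = c (-k)) (ξ : ι → ℝ) :
    conj (∑ k ∈ S, c k * torusChar k ξ) = ∑ k ∈ S, c k * torusChar k ξ := by
  rw [map_sum]
  refine Finset.sum_nbij' (fun k => -k) (fun k => -k) hS hS (fun k _ => neg_neg k)
    (fun k _ => neg_neg k) fun k hk => ?_
  rw [map_mul, hc k hk, conj_torusChar]

lemma integrableOn_const_mul_torusChar (c : ℂ) (k : ι → ℤ) :
    IntegrableOn (fun ξ => c * torusChar k ξ) (Set.univ.pi fun _ : ι => Set.Icc 0 (2 * π)) :=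
  (by fun_prop : Continuous fun ξ => c * torusChar k ξ).continuousOn.integrableOn_compact
    (isCompact_univ_pi fun _ => isCompact_Icc)

lemma integral_sum_mul_sum_torusChar (hS : ∀ k ∈ S, -k ∈ S) (c d : (ι → ℤ) → ℂ) :
    ∫ ξ in Set.univ.pi fun _ : ι => Set.Icc 0 (2 * π),
        (∑ k ∈ S, c k * torusChar k ξ) * (∑ l ∈ S, d l * torusChar l ξ)
      = (((2 * π) ^ Fintype.card ι : ℝ) : ℂ) * ∑ k ∈ S, c k * d (-k) := by
  have hprod : ∀ ξ, (∑ k ∈ S, c k * torusChar k ξ) * (∑ l ∈ S, d l * torusChar l ξ)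
      = ∑ k ∈ S, ∑ l ∈ S, c k * d l * torusChar (k + l) ξ := fun ξ => by
    rw [Finset.sum_mul_sum]
    simp only [torusChar_add]
    exact Finset.sum_congr rfl fun k _ => Finset.sum_congr rfl fun l _ => by ring
  simp only [hprod]
  rw [integral_finsetSum _ fun k _ => integrable_finsetSum _ fun l _ =>
    integrableOn_const_mul_torusChar _ _, Finset.mul_sum]
  refine Finset.sum_congr rfl fun k hk => ?_
  rw [integral_finsetSum _ fun l _ => integrableOn_const_mul_torusChar _ _]
  simp only [integral_const_mul, integral_torusChar, add_eq_zero_iff_eq_neg', mul_ite, mul_zero]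
  rw [Finset.sum_ite_eq' S (-k), if_pos (hS k hk), mul_comm]

lemma integral_re_mul_re_sum_torusChar (hS : ∀ k ∈ S, -k ∈ S) {c d : (ι → ℤ) → ℂ}
    (hc : ∀ k ∈ S, conj (c k) = c (-k)) (hd : ∀ k ∈ S, conj (d k) = d (-k)) :
    ∫ ξ in Set.univ.pi fun _ : ι => Set.Icc 0 (2 * π),
        (∑ k ∈ S, c k * torusChar k ξ).re * (∑ l ∈ S, d l * torusChar l ξ).re
      = (2 * π) ^ Fintype.card ι * (∑ k ∈ S, c k * conj (d k)).re := by
  have hreal : ∀ {e : (ι → ℤ) → ℂ}, (∀ k ∈ S, conj (e k) = e (-k)) → ∀ ξ,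
      ((∑ k ∈ S, e k * torusChar k ξ).re : ℂ) = ∑ k ∈ S, e k * torusChar k ξ :=
    fun he ξ => conj_eq_iff_re.mp (conj_sum_torusChar hS he ξ)
  rw [← ofReal_re (∫ _ in _, _), ← integral_complex_ofReal]
  simp only [ofReal_mul, hreal hc, hreal hd]
  rw [integral_sum_mul_sum_torusChar hS, re_ofReal_mul]
  congr 2
  exact Finset.sum_congr rfl fun k hk => by rw [hd k hk]

end TrigPolynomial

section DotProduct

variable {ι : Type*} [Fintype ι]

lemma div_dotProduct (v w : ι → ℝ) (r : ℝ) : (fun i => v i / r) ⬝ᵥ w = (v ⬝ᵥ w) / r := by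
  simp only [dotProduct, div_mul_eq_mul_div, Finset.sum_div]

lemma dotProduct_self_of_sqrt_eq {v : ι → ℝ} {r : ℝ} (h : √(∑ i, v i ^ 2) = r) :
    v ⬝ᵥ v = r ^ 2 := by
  rw [← h, Real.sq_sqrt (Finset.sum_nonneg fun i _ => sq_nonneg (v i))]
  simp only [dotProduct, sq]

end DotProduct

lemma re_mul_mul_conj_mul (a z w : ℂ) : (a * z * conj (a * w)).re = ‖a‖ ^ 2 * (z * conj w).re := by
  rw [map_mul, mul_mul_mul_comm, mul_conj, normSq_eq_norm_sq, re_ofReal_mul]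

lemma cross3_neg_left (u v : Fin 3 → ℝ) : cross3 (-u) v = -cross3 u v :=
  LinearMap.map_neg₂ crossProduct u v

-- The contraction `ε_iab ε_jcd = δ_ij (δ_ac δ_bd - δ_ad δ_bc) - …` applied to `K × A`.
lemma cross3_apply_mul_cross3_apply (K A : Fin 3 → ℝ) (i j : Fin 3) :
    cross3 K A i * cross3 K A j
      = (K ⬝ᵥ K) * (A ⬝ᵥ A) * (if i = j then 1 else 0) - (A ⬝ᵥ A) * (K i * K j)
        - (K ⬝ᵥ K) * (A i * A j)
        + (K ⬝ᵥ A) * (K i * A j + A i * K j - (K ⬝ᵥ A) * (if i = j then 1 else 0)) := by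
  fin_cases i <;> fin_cases j <;> simp [cross3, dotProduct, Fin.sum_univ_three] <;> ring

lemma mul_add_cross3_mul_cross3 {K A : Fin 3 → ℝ} (hK : K ⬝ᵥ K = 1) (hKA : K ⬝ᵥ A = 0)
    (i j : Fin 3) :
    A i * A j + cross3 K A i * cross3 K A j
      = (A ⬝ᵥ A) * ((if i = j then 1 else 0) - K i * K j) := by
  rw [cross3_apply_mul_cross3_apply, hK, hKA]
  ring

def beltramiVector (K A : Fin 3 → ℝ) (i : Fin 3) : ℂ :=
  A i + I * (cross3 K A i : ℂ)

lemma conj_beltramiVector (K A : Fin 3 → ℝ) (i : Fin 3) :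
    conj (beltramiVector K A i) = beltramiVector (-K) A i := by
  simp only [beltramiVector, map_add, map_mul, conj_I, conj_ofReal, cross3_neg_left, Pi.neg_apply,
    ofReal_neg]
  ring

lemma re_beltramiVector_mul_conj {K A : Fin 3 → ℝ} (hK : K ⬝ᵥ K = 1) (hKA : K ⬝ᵥ A = 0)
    (i j : Fin 3) :
    (beltramiVector K A i * conj (beltramiVector K A j)).re
      = (A ⬝ᵥ A) * ((if i = j then 1 else 0) - K i * K j) := by
  rw [← mul_add_cross3_mul_cross3 hK hKA]
  simp [beltramiVector, mul_re]

/-- **Average of `W ⊗ W` for Beltrami flows.**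
With the notation of Proposition 2.1 (Beltrami flows),
`⨍_{𝕋³} W ⊗ W dξ = (1/2) Σ_{|k|=λ̄} |a_k|² (Id − (k/|k|) ⊗ (k/|k|))`. -/
theorem beltrami_average
    (lam : ℝ) (hlam : 1 ≤ lam)
    (S : Finset (Fin 3 → ℤ))
    (hSnorm : ∀ k ∈ S, Real.sqrt (∑ i, ((k i : ℝ)) ^ 2) = lam)
    (hSneg : ∀ k ∈ S, -k ∈ S)
    (A : (Fin 3 → ℤ) → (Fin 3 → ℝ))
    (hAperp : ∀ k ∈ S, ∑ i, A k i * (k i : ℝ) = 0)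
    (hAnorm : ∀ k ∈ S, Real.sqrt (∑ i, (A k i) ^ 2) = 1 / Real.sqrt 2)
    (hAneg : ∀ k ∈ S, A (-k) = A k)
    (a : (Fin 3 → ℤ) → ℂ)
    (ha : ∀ k ∈ S, (starRingEnd ℂ) (a k) = a (-k))
    (B : (Fin 3 → ℤ) → (Fin 3 → ℂ))
    (hB : ∀ k i, B k i = (A k i : ℂ)
      + Complex.I * ((cross3 (fun j => (k j : ℝ) / lam) (A k) i : ℝ) : ℂ))
    (W : (Fin 3 → ℝ) → (Fin 3 → ℂ))
    (hW : ∀ ξ i, W ξ i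
      = ∑ k ∈ S, a k * B k i * Complex.exp (Complex.I * ((∑ j, (k j : ℝ) * ξ j : ℝ) : ℂ)))
    -- the real-valued vector field determined by `W`
    (Wr : (Fin 3 → ℝ) → (Fin 3 → ℝ))
    (hWr : ∀ ξ i, Wr ξ i = (W ξ i).re) :
    ∀ i j : Fin 3,
      (2 * Real.pi) ^ 3 * ((1 : ℝ) / 2 * ∑ k ∈ S, (‖a k‖) ^ 2 *
          ((if i = j then (1 : ℝ) else 0) - ((k i : ℝ) / lam) * ((k j : ℝ) / lam)))
        = ∫ ξ in D3, Wr ξ i * Wr ξ j := by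
  intro i j
  set K : (Fin 3 → ℤ) → Fin 3 → ℝ := fun k j => (k j : ℝ) / lam
  have hlam0 : lam ≠ 0 := (zero_lt_one.trans_le hlam).ne'
  have hKK : ∀ k ∈ S, K k ⬝ᵥ K k = 1 := fun k hk => by
    rw [div_dotProduct, dotProduct_comm, div_dotProduct, dotProduct_self_of_sqrt_eq (hSnorm k hk)]
    field_simp
  have hKA : ∀ k ∈ S, K k ⬝ᵥ A k = 0 := fun k hk => by
    rw [div_dotProduct, dotProduct_comm]
    exact (hAperp k hk).symm ▸ zero_div lam
  have hAA : ∀ k ∈ S, A k ⬝ᵥ A k = 1 / 2 := fun k hk => by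
    rw [dotProduct_self_of_sqrt_eq (hAnorm k hk), div_pow, Real.sq_sqrt zero_le_two, one_pow]
  have hBK : ∀ k t, B k t = beltramiVector (K k) (A k) t := hB
  have hcoef : ∀ t, ∀ k ∈ S, conj (a k * B k t) = a (-k) * B (-k) t := fun t k hk => by
    have hKneg : K (-k) = -K k := funext fun j => by simp [K, neg_div]
    rw [map_mul, ha k hk, hBK, hBK, conj_beltramiVector, hKneg, hAneg k hk]
  have hWr' : ∀ ξ t, Wr ξ t = (∑ k ∈ S, a k * B k t * torusChar k ξ).re := fun ξ t => by
    rw [hWr, hW]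
    rfl
  simp only [hWr']
  rw [D3, integral_re_mul_re_sum_torusChar hSneg (hcoef i) (hcoef j), Fintype.card_fin, re_sum,
    Finset.mul_sum]
  congr 1
  refine Finset.sum_congr rfl fun k hk => ?_
  rw [re_mul_mul_conj_mul, hBK, hBK, re_beltramiVector_mul_conj (hKK k hk) (hKA k hk), hAA k hk]
  ring
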